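/- Let D : X → Y be a bounded linear operator between Banach spaces, and let K : X → Z be a compact linear operator into a Banach space Z, such that there exists c > 0 with ‖x‖_X ≤ c(‖Kx‖_Z + ‖Dx‖_Y) for all x ∈ X. Then ker D is finite-dimensional and the range of D is closed (i.e. D is semi-Fredholm). -/

import Mathlib

/-!
The estimate says that `x ↦ (K x, D x)` is antilipschitz. On `ker D` it makes the compact
operator `K` antilipschitz, so the unit ball of `ker D` is totally bounded and `ker D` is
finite-dimensional by Riesz's theorem. For the range, restrict `D` to a closed complement `W` of
`ker D`. Unit vectors `wₙ ∈ W` with `D wₙ → 0` would, along a subsequence on which `K wₙ`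
converges, be Cauchy and converge to a unit vector of `ker D ∩ W = 0`. Hence `D` is bounded below
on `W`, and `range D = D(W)` is closed.
-/

open Filter Topology NNReal

theorem FiniteDimensional.of_isCompactOperator_of_antilipschitzWith {𝕜 X Z : Type*}
    [NontriviallyNormedField 𝕜] [CompleteSpace 𝕜]
    [NormedAddCommGroup X] [NormedSpace 𝕜 X] [NormedAddCommGroup Z] [NormedSpace 𝕜 Z]
    {T : X →L[𝕜] Z} (hT : IsCompactOperator T) {C : ℝ≥0} (hC : AntilipschitzWith C T) :
    FiniteDimensional 𝕜 X := by
  obtain ⟨M, hM, hTM⟩ := hT.image_closedBall_subset_compact 1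
  refine .of_totallyBounded_nhds_zero 𝕜 (Metric.closedBall_mem_nhds 0 one_pos) ?_
  exact (totallyBounded_preimage (hC.isUniformInducing T.uniformContinuous)
    hM.totallyBounded).subset (Set.image_subset_iff.1 hTM)

namespace ContinuousLinearMap

section NontriviallyNormedField

variable {𝕜 X Y Z : Type*} [NontriviallyNormedField 𝕜]
  [NormedAddCommGroup X] [NormedSpace 𝕜 X] [NormedAddCommGroup Y] [NormedSpace 𝕜 Y]
  [NormedAddCommGroup Z] [NormedSpace 𝕜 Z] {K : X →L[𝕜] Z} {D : X →L[𝕜] Y}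

theorem antilipschitzWith_prod_of_norm_le_mul_add {c : ℝ}
    (h : ∀ x, ‖x‖ ≤ c * (‖K x‖ + ‖D x‖)) : AntilipschitzWith (2 * c.toNNReal) (K.prod D) := by
  refine (K.prod D).antilipschitz_of_bound fun x ↦ ?_
  have hsum : ‖K x‖ + ‖D x‖ ≤ 2 * ‖(K.prod D) x‖ := by
    rw [prod_apply, Prod.norm_def]
    linarith [le_max_left ‖K x‖ ‖D x‖, le_max_right ‖K x‖ ‖D x‖]
  calc ‖x‖ ≤ c * (‖K x‖ + ‖D x‖) := h x
    _ ≤ c.toNNReal * (‖K x‖ + ‖D x‖) := by gcongr; exact Real.le_coe_toNNReal c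
    _ ≤ c.toNNReal * (2 * ‖(K.prod D) x‖) := by gcongr
    _ = ↑(2 * c.toNNReal) * ‖(K.prod D) x‖ := by push_cast; ring

variable {C : ℝ≥0} (hK : IsCompactOperator K) (hKD : AntilipschitzWith C (K.prod D))
include hK hKD

theorem finiteDimensional_ker_of_antilipschitzWith_prod [CompleteSpace 𝕜] :
    FiniteDimensional 𝕜 (LinearMap.ker (D : X →ₗ[𝕜] Y)) := by
  refine .of_isCompactOperator_of_antilipschitzWith
    (T := K ∘L (LinearMap.ker (D : X →ₗ[𝕜] Y)).subtypeL) (hK.comp_clm _) (C := C) ?_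
  refine antilipschitz_of_bound _ fun x ↦ ?_
  simpa [Prod.norm_def, LinearMap.mem_ker.1 x.2] using (K.prod D).bound_of_antilipschitz hKD x

theorem exists_tendsto_subseq_of_cauchySeq_comp [CompleteSpace X] {z : ℕ → X} {R : ℝ}
    (hz : ∀ n, ‖z n‖ ≤ R) (hDz : CauchySeq (D ∘ z)) :
    ∃ x, ∃ φ : ℕ → ℕ, StrictMono φ ∧ Tendsto (z ∘ φ) atTop (𝓝 x) := by
  obtain ⟨M, hM, hKM⟩ := hK.image_closedBall_subset_compact R
  obtain ⟨_, -, φ, hφ, hKφ⟩ :=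
    hM.tendsto_subseq fun n ↦ hKM ⟨z n, mem_closedBall_zero_iff.2 (hz n), rfl⟩
  have hKDφ : CauchySeq ((K.prod D) ∘ z ∘ φ) :=
    hKφ.cauchySeq.prodMk (hDz.comp_tendsto hφ.tendsto_atTop)
  have hφ' : CauchySeq (z ∘ φ) :=
    (hKD.isUniformInducing (K.prod D).uniformContinuous).cauchy_map_iff.1 (by rwa [map_map])
  obtain ⟨x, hx⟩ := cauchySeq_tendsto_of_complete hφ'
  exact ⟨x, φ, hφ, hx⟩

end NontriviallyNormedField

section RCLike

variable {𝕜 X Y Z : Type*} [RCLike 𝕜]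
  [NormedAddCommGroup X] [NormedSpace 𝕜 X] [CompleteSpace X]
  [NormedAddCommGroup Y] [NormedSpace 𝕜 Y] [NormedAddCommGroup Z] [NormedSpace 𝕜 Z]
  {K : X →L[𝕜] Z} {D : X →L[𝕜] Y} {C : ℝ≥0}
  (hK : IsCompactOperator K) (hKD : AntilipschitzWith C (K.prod D))
include hK hKD

theorem exists_antilipschitzWith_of_injective (hD : Function.Injective D) :
    ∃ C', AntilipschitzWith C' D := by
  rw [antilipschitzWith_iff_exists_mul_le_norm]
  by_contra! hsmall
  have hunit : ∀ n : ℕ, ∃ z : X, ‖z‖ = 1 ∧ ‖D z‖ < 1 / (n + 1) := by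
    intro n
    obtain ⟨x, hx⟩ := hsmall (1 / (n + 1)) (by positivity)
    have hx0 : x ≠ 0 := by rintro rfl; simp at hx
    refine ⟨(‖x‖⁻¹ : 𝕜) • x, norm_smul_inv_norm hx0, ?_⟩
    rw [map_smul, norm_smul, norm_inv, RCLike.norm_ofReal, abs_norm,
      inv_mul_lt_iff₀ (norm_pos_iff.2 hx0), mul_comm]
    exact hx
  choose z hz1 hDz using hunit
  have hDz0 : Tendsto (D ∘ z) atTop (𝓝 0) :=
    squeeze_zero_norm (fun n ↦ (hDz n).le) tendsto_one_div_add_atTop_nhds_zero_nat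
  obtain ⟨x, φ, hφ, hx⟩ :=
    exists_tendsto_subseq_of_cauchySeq_comp hK hKD (fun n ↦ (hz1 n).le) hDz0.cauchySeq
  have hDx : D x = 0 :=
    tendsto_nhds_unique ((D.continuous.tendsto x).comp hx) (hDz0.comp hφ.tendsto_atTop)
  have hx1 : ‖x‖ = 1 := tendsto_nhds_unique hx.norm (by simp [hz1])
  exact one_ne_zero (hx1.symm.trans (norm_eq_zero.2 (hD (hDx.trans (map_zero D).symm))))

theorem isClosed_range_of_antilipschitzWith_prod :
    IsClosed (LinearMap.range (D : X →ₗ[𝕜] Y) : Set Y) := by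
  have := finiteDimensional_ker_of_antilipschitzWith_prod hK hKD
  obtain ⟨W, hWc, hW⟩ := (Submodule.ClosedComplemented.of_finiteDimensional
    (LinearMap.ker (D : X →ₗ[𝕜] Y))).exists_isClosed_isCompl
  have : CompleteSpace W := hWc.completeSpace_coe
  let e := (D : X →ₗ[𝕜] Y).kerComplementEquivRange hW.symm
  have hKDW : AntilipschitzWith C ((K ∘L W.subtypeL).prod (D ∘L W.subtypeL)) :=
    .of_le_mul_dist fun w w' ↦ hKD.le_mul_dist w w'
  have hinj : Function.Injective (D ∘L W.subtypeL) := fun w w' h ↦ e.injective (Subtype.ext h)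
  obtain ⟨C', hC'⟩ := exists_antilipschitzWith_of_injective (hK.comp_clm W.subtypeL) hKDW hinj
  have hrange : (LinearMap.range (D : X →ₗ[𝕜] Y) : Set Y) = Set.range (D ∘L W.subtypeL) := by
    ext y
    refine ⟨fun hy ↦ ⟨e.symm ⟨y, hy⟩, congrArg Subtype.val (e.apply_symm_apply ⟨y, hy⟩)⟩, ?_⟩
    rintro ⟨w, rfl⟩
    exact LinearMap.mem_range_self _ _
  rw [hrange]
  exact hC'.isClosed_range (D ∘L W.subtypeL).uniformContinuous

end RCLike

end ContinuousLinearMap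

theorem stmt6_general {X Y Z : Type*}
    [NormedAddCommGroup X] [NormedSpace ℝ X] [CompleteSpace X]
    [NormedAddCommGroup Y] [NormedSpace ℝ Y]
    [NormedAddCommGroup Z] [NormedSpace ℝ Z]
    (D : X →L[ℝ] Y) (K : X →L[ℝ] Z) (hK : IsCompactOperator K)
    (c : ℝ) (h : ∀ x : X, ‖x‖ ≤ c * (‖K x‖ + ‖D x‖)) :
    FiniteDimensional ℝ (LinearMap.ker (D : X →ₗ[ℝ] Y)) ∧ IsClosed (LinearMap.range (D : X →ₗ[ℝ] Y) : Set Y) := by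
  have hKD := ContinuousLinearMap.antilipschitzWith_prod_of_norm_le_mul_add h
  exact ⟨ContinuousLinearMap.finiteDimensional_ker_of_antilipschitzWith_prod hK hKD,
    ContinuousLinearMap.isClosed_range_of_antilipschitzWith_prod hK hKD⟩

/-- the abstract semi-Fredholm criterion.  If `D : X → Y` is
bounded, `K : X → Z` is compact, and `‖x‖ ≤ c(‖Kx‖ + ‖Dx‖)` for all `x`, then
`ker D` is finite-dimensional and `range D` is closed. -/
theorem stmt6 {X Y Z : Type*}
    [NormedAddCommGroup X] [NormedSpace ℝ X] [CompleteSpace X]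
    [NormedAddCommGroup Y] [NormedSpace ℝ Y] [CompleteSpace Y]
    [NormedAddCommGroup Z] [NormedSpace ℝ Z] [CompleteSpace Z]
    (D : X →L[ℝ] Y) (K : X →L[ℝ] Z) (hK : IsCompactOperator K)
    (c : ℝ) (hc : 0 < c) (h : ∀ x : X, ‖x‖ ≤ c * (‖K x‖ + ‖D x‖)) :
    FiniteDimensional ℝ (LinearMap.ker (D : X →ₗ[ℝ] Y)) ∧ IsClosed (LinearMap.range (D : X →ₗ[ℝ] Y) : Set Y) :=
  stmt6_general D K hK c h
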